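/- Let α > 0 and define b(t) = (√α - i (e^{2√α t}-1)/(e^{2√α t}+1)) e^{-i(1+2α)t}, c(t) = (4e^{2√α t}/(1+e^{2√α t})^2) e^{-i(1+2α)t}, p(t) = -i (e^{2√α t}-1)/(e^{2√α t}+1). Then (b, c, p) solves the ODE system i b' = |b|^2 b + 2b|c|^2/(1-|p|^2) + |c|^2 c conj(p)/(1-|p|^2)^2 + αb, i c' = 2|b|^2 c + 2b|c|^2 p/(1-|p|^2) + |c|^2 c/(1-|p|^2)^2, i p' = c conj(b) + |c|^2 p/(1-|p|^2), with initial data b(0) = √α, c(0) = 1, p(0) = 0. -/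

import Mathlib

/-! With `s = √α` and `E = e^{2st}` one has `(E - 1)/(E + 1) = tanh(st)` and
`4E/(1 + E)² = 1 - tanh²(st)`, so the triple is `b = (s - iq)z`, `c = (1 - q²)z`, `p = -iq` with
`q = tanh(st)` and the phase `z = e^{-i(1+2α)t}`. Because `q` solves the Riccati equation
`q' = s(1 - q²)` and `|z| = 1`, every modulus in the system is explicit
(`|b|² = α + q²`, `|c|² = (1 - q²)²`, `|p|² = q²`), and each right-hand side collapses to the
product-rule derivative by a polynomial identity in `s`, `q`, `z`, `conj z` (using `z conj z = 1`). -/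

/-- `e^{2√α t}`. -/
noncomputable def expo (α t : ℝ) : ℝ := Real.exp (2 * Real.sqrt α * t)

/-- Explicit solution: `b(t) = (√α - i(e^{2√α t}-1)/(e^{2√α t}+1)) e^{-i(1+2α)t}`. -/
noncomputable def bfun (α t : ℝ) : ℂ :=
  ((Real.sqrt α : ℝ) - Complex.I * (((expo α t - 1) / (expo α t + 1) : ℝ) : ℂ)) *
    Complex.exp (-Complex.I * ((1 + 2 * α : ℝ) : ℂ) * (t : ℂ))

/-- Explicit solution: `c(t) = 4e^{2√α t}(1+e^{2√α t})^{-2} e^{-i(1+2α)t}`. -/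
noncomputable def cfun (α t : ℝ) : ℂ :=
  ((4 * expo α t / (1 + expo α t) ^ 2 : ℝ) : ℂ) *
    Complex.exp (-Complex.I * ((1 + 2 * α : ℝ) : ℂ) * (t : ℂ))

/-- Explicit solution: `p(t) = -i(e^{2√α t}-1)/(e^{2√α t}+1)`. -/
noncomputable def pfun (α t : ℝ) : ℂ :=
  -Complex.I * (((expo α t - 1) / (expo α t + 1) : ℝ) : ℂ)

/-- Right-hand sides of the reduced α-Szegő ODE system. -/
noncomputable def rhsB (α : ℝ) (b c p : ℂ) : ℂ :=
  -Complex.I * ((‖b‖ ^ 2 : ℝ) * b + 2 * b * (‖c‖ ^ 2 : ℝ) / ((1 - ‖p‖ ^ 2 : ℝ) : ℂ)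
    + (‖c‖ ^ 2 : ℝ) * c * (starRingEnd ℂ) p / ((1 - ‖p‖ ^ 2 : ℝ) : ℂ) ^ 2 + (α : ℂ) * b)

noncomputable def rhsC (b c p : ℂ) : ℂ :=
  -Complex.I * (2 * (‖b‖ ^ 2 : ℝ) * c + 2 * b * (‖c‖ ^ 2 : ℝ) * p / ((1 - ‖p‖ ^ 2 : ℝ) : ℂ)
    + (‖c‖ ^ 2 : ℝ) * c / ((1 - ‖p‖ ^ 2 : ℝ) : ℂ) ^ 2)

noncomputable def rhsP (b c p : ℂ) : ℂ :=
  -Complex.I * (c * (starRingEnd ℂ) b + (‖c‖ ^ 2 : ℝ) * p / ((1 - ‖p‖ ^ 2 : ℝ) : ℂ))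

open Complex ComplexConjugate

lemma Real.hasDerivAt_tanh (x : ℝ) : HasDerivAt Real.tanh (1 - Real.tanh x ^ 2) x := by
  rw [show Real.tanh = Real.sinh / Real.cosh from funext Real.tanh_eq_sinh_div_cosh]
  refine ((Real.hasDerivAt_sinh x).div (Real.hasDerivAt_cosh x)
    (Real.cosh_pos x).ne').congr_deriv ?_
  rw [Pi.div_apply]
  field_simp

lemma expo_sub_one_div_add_one (α t : ℝ) :
    (expo α t - 1) / (expo α t + 1) = Real.tanh (Real.sqrt α * t) := by
  have hexpo : expo α t = Real.exp (Real.sqrt α * t) ^ 2 := by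
    rw [expo, ← Real.exp_nat_mul]; ring_nf
  have hpos := Real.exp_pos (Real.sqrt α * t)
  rw [Real.tanh_eq, Real.exp_neg, hexpo]
  field_simp

lemma four_mul_expo_div (α t : ℝ) :
    4 * expo α t / (1 + expo α t) ^ 2 = 1 - Real.tanh (Real.sqrt α * t) ^ 2 := by
  have hpos : 0 < expo α t := Real.exp_pos _
  rw [← expo_sub_one_div_add_one]
  field_simp
  ring

noncomputable def phase (ω t : ℝ) : ℂ := exp (-I * ω * t)

lemma hasDerivAt_phase (ω t : ℝ) : HasDerivAt (phase ω) (-I * ω * phase ω t) t := by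
  have h := ((hasDerivAt_id t).ofReal_comp.const_mul (-I * ω)).cexp
  simp only [id, ofReal_one, mul_one] at h
  exact h.congr_deriv (mul_comm _ _)

lemma norm_phase (ω t : ℝ) : ‖phase ω t‖ = 1 := by
  simp [phase, norm_exp]

section Ansatz

variable {α s q : ℝ} {z : ℂ}

lemma sq_norm_sub_I_mul_mul (hz : ‖z‖ = 1) : ‖((s : ℂ) - I * q) * z‖ ^ 2 = s ^ 2 + q ^ 2 := by
  have hmk : (s : ℂ) - I * q = ⟨s, -q⟩ := by apply Complex.ext <;> simp
  rw [norm_mul, hz, mul_one, hmk, ← normSq_eq_norm_sq, normSq_mk]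
  ring

lemma sq_norm_ofReal_mul (r : ℝ) (hz : ‖z‖ = 1) : ‖(r : ℂ) * z‖ ^ 2 = r ^ 2 := by
  rw [norm_mul, hz, mul_one, norm_real, Real.norm_eq_abs, sq_abs]

lemma sq_norm_neg_I_mul (q : ℝ) : ‖-I * (q : ℂ)‖ ^ 2 = q ^ 2 := by
  simp

lemma rhsB_ansatz (hs : s ^ 2 = α) (hq : q ^ 2 ≠ 1) (hz : ‖z‖ = 1) :
    rhsB α (((s : ℂ) - I * q) * z) (((1 - q ^ 2 : ℝ) : ℂ) * z) (-I * q) =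
      -I * ((s * (1 - q ^ 2) : ℝ) + (1 + 2 * α : ℝ) * ((s : ℂ) - I * q)) * z := by
  have hq' : (1 : ℂ) - (q : ℂ) ^ 2 ≠ 0 := by exact_mod_cast sub_ne_zero.mpr (Ne.symm hq)
  subst hs
  rw [rhsB, sq_norm_sub_I_mul_mul hz, sq_norm_ofReal_mul _ hz, sq_norm_neg_I_mul]
  simp only [map_mul, map_neg, conj_I, conj_ofReal]
  push_cast
  field_simp
  ring

lemma rhsC_ansatz (hs : s ^ 2 = α) (hq : q ^ 2 ≠ 1) (hz : ‖z‖ = 1) :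
    rhsC (((s : ℂ) - I * q) * z) (((1 - q ^ 2 : ℝ) : ℂ) * z) (-I * q) =
      -I * ((1 + 2 * α : ℝ) - 2 * I * (s * q : ℝ)) * (1 - q ^ 2 : ℝ) * z := by
  have hq' : (1 : ℂ) - (q : ℂ) ^ 2 ≠ 0 := by exact_mod_cast sub_ne_zero.mpr (Ne.symm hq)
  subst hs
  rw [rhsC, sq_norm_sub_I_mul_mul hz, sq_norm_ofReal_mul _ hz, sq_norm_neg_I_mul]
  push_cast
  field_simp
  linear_combination (-2 * z * q ^ 2) * I_sq

lemma rhsP_ansatz (hq : q ^ 2 ≠ 1) (hz : ‖z‖ = 1) :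
    rhsP (((s : ℂ) - I * q) * z) (((1 - q ^ 2 : ℝ) : ℂ) * z) (-I * q) =
      -I * (s * (1 - q ^ 2) : ℝ) := by
  have hq' : (1 : ℂ) - (q : ℂ) ^ 2 ≠ 0 := by exact_mod_cast sub_ne_zero.mpr (Ne.symm hq)
  have hzz : z * conj z = 1 := by rw [mul_conj', hz]; norm_num
  rw [rhsP, sq_norm_ofReal_mul _ hz, sq_norm_neg_I_mul]
  simp only [map_mul, map_sub, conj_I, conj_ofReal]
  push_cast
  field_simp
  linear_combination (-((s : ℂ) + I * q)) * hzz

end Ansatz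

section Riccati

variable {α s : ℝ} {q : ℝ → ℝ} {t : ℝ}

lemma hasDerivAt_ansatz_b (hs : s ^ 2 = α) (hq : HasDerivAt q (s * (1 - q t ^ 2)) t)
    (hq1 : q t ^ 2 ≠ 1) :
    HasDerivAt (fun t => ((s : ℂ) - I * q t) * phase (1 + 2 * α) t)
      (rhsB α (((s : ℂ) - I * q t) * phase (1 + 2 * α) t)
        (((1 - q t ^ 2 : ℝ) : ℂ) * phase (1 + 2 * α) t) (-I * q t)) t := by
  rw [rhsB_ansatz hs hq1 (norm_phase _ _)]
  refine (((hq.ofReal_comp.const_mul I).const_sub _).mul (hasDerivAt_phase _ t)).congr_deriv ?_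
  ring

lemma hasDerivAt_ansatz_c (hs : s ^ 2 = α) (hq : HasDerivAt q (s * (1 - q t ^ 2)) t)
    (hq1 : q t ^ 2 ≠ 1) :
    HasDerivAt (fun t => ((1 - q t ^ 2 : ℝ) : ℂ) * phase (1 + 2 * α) t)
      (rhsC (((s : ℂ) - I * q t) * phase (1 + 2 * α) t)
        (((1 - q t ^ 2 : ℝ) : ℂ) * phase (1 + 2 * α) t) (-I * q t)) t := by
  rw [rhsC_ansatz hs hq1 (norm_phase _ _)]
  refine (((hq.pow 2).const_sub 1).ofReal_comp.mul (hasDerivAt_phase _ t)).congr_deriv ?_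
  simp only [Pi.pow_apply]
  push_cast
  linear_combination (2 * s * q t * (q t ^ 2 - 1) * phase (1 + 2 * α) t) * I_sq

lemma hasDerivAt_ansatz_p (hq : HasDerivAt q (s * (1 - q t ^ 2)) t) (hq1 : q t ^ 2 ≠ 1) :
    HasDerivAt (fun t => -I * q t)
      (rhsP (((s : ℂ) - I * q t) * phase (1 + 2 * α) t)
        (((1 - q t ^ 2 : ℝ) : ℂ) * phase (1 + 2 * α) t) (-I * q t)) t := by
  rw [rhsP_ansatz hq1 (norm_phase _ _)]
  exact hq.ofReal_comp.const_mul (-I)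

end Riccati

lemma hasDerivAt_tanh_mul (s t : ℝ) :
    HasDerivAt (fun t => Real.tanh (s * t)) (s * (1 - Real.tanh (s * t) ^ 2)) t := by
  have h := (Real.hasDerivAt_tanh (s * t)).comp t ((hasDerivAt_id t).const_mul s)
  simp only [mul_one] at h
  exact h.congr_deriv (mul_comm _ _)

lemma bfun_eq (α t : ℝ) :
    bfun α t = ((Real.sqrt α : ℂ) - I * Real.tanh (Real.sqrt α * t)) * phase (1 + 2 * α) t := by
  rw [bfun, expo_sub_one_div_add_one, phase]

lemma cfun_eq (α t : ℝ) :
    cfun α t = ((1 - Real.tanh (Real.sqrt α * t) ^ 2 : ℝ) : ℂ) * phase (1 + 2 * α) t := by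
  rw [cfun, four_mul_expo_div, phase]

lemma pfun_eq (α t : ℝ) : pfun α t = -I * Real.tanh (Real.sqrt α * t) := by
  rw [pfun, expo_sub_one_div_add_one]

/-- For `α > 0`, the explicit triple `(b, c, p)` above solves the reduced
α-Szegő ODE system with initial data `b(0) = √α`, `c(0) = 1`, `p(0) = 0`. -/
theorem stmt14 (α : ℝ) (hα : 0 < α) :
    bfun α 0 = (Real.sqrt α : ℂ) ∧ cfun α 0 = 1 ∧ pfun α 0 = 0 ∧
    (∀ t, HasDerivAt (bfun α) (rhsB α (bfun α t) (cfun α t) (pfun α t)) t) ∧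
    (∀ t, HasDerivAt (cfun α) (rhsC (bfun α t) (cfun α t) (pfun α t)) t) ∧
    (∀ t, HasDerivAt (pfun α) (rhsP (bfun α t) (cfun α t) (pfun α t)) t) := by
  have hs : Real.sqrt α ^ 2 = α := Real.sq_sqrt hα.le
  have hq := hasDerivAt_tanh_mul (Real.sqrt α)
  have hq1 (t : ℝ) : Real.tanh (Real.sqrt α * t) ^ 2 ≠ 1 := (Real.tanh_sq_lt_one _).ne
  rw [funext (bfun_eq α), funext (cfun_eq α), funext (pfun_eq α)]
  refine ⟨by simp [phase], by simp [phase], by simp, fun t => ?_, fun t => ?_, fun t => ?_⟩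
  · exact hasDerivAt_ansatz_b hs (hq t) (hq1 t)
  · exact hasDerivAt_ansatz_c hs (hq t) (hq1 t)
  · exact hasDerivAt_ansatz_p (hq t) (hq1 t)
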